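/- Let β ≥ 1 and C ≥ (e/β)^β, and suppose x > 1 satisfies x = C log^β(x). Then x ≤ e^{(α−1)β} β^β C log^β(β C^{1/β}), where α = 2 − log(e−1). -/

import Mathlib

open Matrix MeasureTheory ProbabilityTheory
open scoped Classical RealInnerProductSpace

/-- Operator (spectral) norm of a real matrix. -/
noncomputable def opNorm {m n : Type*} [Fintype m] [Fintype n] [DecidableEq n]
    (A : Matrix m n ℝ) : ℝ :=
  ‖LinearMap.toContinuousLinearMap (Matrix.toEuclideanLin A)‖

/-- Frobenius norm of a real matrix. -/
noncomputable def frob {m n : Type*} [Fintype m] [Fintype n] (A : Matrix m n ℝ) : ℝ :=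
  Real.sqrt (∑ i, ∑ j, (A i j) ^ 2)

/-- Positive semidefinite square root (junk value `0` off the PSD matrices). -/
noncomputable def sqrtPD {n : Type*} [Fintype n] [DecidableEq n]
    (A : Matrix n n ℝ) : Matrix n n ℝ :=
  if h : A.PosSemidef then
    (h.1.eigenvectorUnitary : Matrix n n ℝ) *
      Matrix.diagonal (((↑) : ℝ → ℝ) ∘ Real.sqrt ∘ h.1.eigenvalues) *
      (star (h.1.eigenvectorUnitary : Matrix n n ℝ))
  else 0

/-- Matrix logarithm of a hermitian matrix via the spectral theorem
(junk value `0` off the hermitian matrices). -/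
noncomputable def mlog {n : Type*} [Fintype n] [DecidableEq n]
    (A : Matrix n n ℝ) : Matrix n n ℝ :=
  if h : A.IsHermitian then
    (h.eigenvectorUnitary : Matrix n n ℝ) * Matrix.diagonal (Real.log ∘ h.eigenvalues) *
      (star (h.eigenvectorUnitary : Matrix n n ℝ))
  else 0

/-- Thompson (invariant) metric `δ∞(A,B) = ‖log (A^{-1/2} B A^{-1/2})‖`. -/
noncomputable def thompson {n : Type*} [Fintype n] [DecidableEq n]
    (A B : Matrix n n ℝ) : ℝ :=
  opNorm (mlog ((sqrtPD A)⁻¹ * B * (sqrtPD A)⁻¹))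

/-- Largest (real) eigenvalue. -/
noncomputable def lamMax {n : Type*} [Fintype n] [DecidableEq n] (A : Matrix n n ℝ) : ℝ :=
  sSup (spectrum ℝ A)

/-- Smallest (real) eigenvalue. -/
noncomputable def lamMin {n : Type*} [Fintype n] [DecidableEq n] (A : Matrix n n ℝ) : ℝ :=
  sInf (spectrum ℝ A)

/-- Solution `P = Σ_{k≥0} (Lᵀ)^k M L^k` of the discrete Lyapunov equation `P = Lᵀ P L + M`. -/
noncomputable def dlyap {n : Type*} [Fintype n] [DecidableEq n]
    (L M : Matrix n n ℝ) : Matrix n n ℝ :=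
  ∑' k : ℕ, (L ^ k)ᵀ * M * (L ^ k)

/-- `K` stabilizes `(A,B)`: the closed loop matrix `A + BK` has spectral radius `< 1`. -/
def Stabilizes {n d : Type*} [Fintype n] [DecidableEq n] [Fintype d]
    (A : Matrix n n ℝ) (B : Matrix n d ℝ) (K : Matrix d n ℝ) : Prop :=
  ∀ z ∈ spectrum ℂ ((A + B * K).map ((↑) : ℝ → ℂ)), ‖z‖ < 1
/-! With `y = log x` the equation reads `y - β log y = log C`, and `s ↦ s - β log s` is strictly
increasing on `[β, ∞)`. For `t = β log (β C^{1/β}) = β log β + log C`, which is `≥ β` by the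
hypothesis on `C`, the tangent-line bound `log u ≤ u / e` shows that `s = e/(e-1) · t` satisfies
`s - β log s ≥ log C`. Hence `y ≤ s`, and `x = C y^β ≤ C s^β`, where `e/(e-1) = e^{α-1}`. -/

open Real

lemma log_le_div_exp_one {u : ℝ} (hu : 0 < u) : log u ≤ u / exp 1 := by
  have h := log_le_sub_one_of_pos (div_pos hu (exp_pos 1))
  rw [log_div hu.ne' (exp_pos 1).ne', log_exp] at h
  linarith

lemma sub_mul_log_lt_sub_mul_log {β a b : ℝ} (hβ : 0 < β) (ha : β ≤ a) (hab : a < b) :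
    a - β * log a < b - β * log b := by
  have ha0 : 0 < a := hβ.trans_le ha
  have hb0 : 0 < b := ha0.trans hab
  have hlog : log (b / a) < b / a - 1 :=
    log_lt_sub_one_of_pos (div_pos hb0 ha0) ((div_eq_one_iff_eq ha0.ne').not.2 hab.ne')
  rw [log_div hb0.ne' ha0.ne'] at hlog
  have hβa : β / a ≤ 1 := (div_le_one ha0).2 ha
  have htangent : β * (b / a - 1) ≤ b - a := by
    calc β * (b / a - 1) = β / a * (b - a) := by field_simp
      _ ≤ 1 * (b - a) := by gcongr
      _ = b - a := one_mul _
  linarith [mul_lt_mul_of_pos_left hlog hβ]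

lemma le_of_sub_mul_log_le {β y s : ℝ} (hβ : 0 < β) (hs : β ≤ s)
    (h : y - β * log y ≤ s - β * log s) : y ≤ s := by
  by_contra! hsy
  linarith [sub_mul_log_lt_sub_mul_log hβ hs hsy]

lemma sub_mul_log_le_sub_mul_log_exp_div_mul {β t : ℝ} (hβ : 0 < β) (ht : 0 < t) :
    t - β * log β ≤ exp 1 / (exp 1 - 1) * t - β * log (exp 1 / (exp 1 - 1) * t) := by
  have he : 0 < exp 1 - 1 := by linarith [exp_one_gt_d9]
  have hu : 0 < exp 1 / (exp 1 - 1) * t / β := div_pos (mul_pos (div_pos (exp_pos 1) he) ht) hβ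
  have hsplit : log (exp 1 / (exp 1 - 1) * t) = log β + log (exp 1 / (exp 1 - 1) * t / β) := by
    rw [← log_mul hβ.ne' hu.ne', mul_div_cancel₀ _ hβ.ne']
  have hbound := mul_le_mul_of_nonneg_left (log_le_div_exp_one hu) hβ.le
  have hslope : β * (exp 1 / (exp 1 - 1) * t / β / exp 1) = exp 1 / (exp 1 - 1) * t - t := by
    field_simp
    ring
  rw [hsplit, mul_add]
  linarith

lemma one_le_log_mul_rpow_one_div {β C : ℝ} (hβ : 0 < β) (hC : (exp 1 / β) ^ β ≤ C) :
    1 ≤ log (β * C ^ (1 / β)) := by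
  have hC0 : 0 < C := (by positivity : 0 < (exp 1 / β) ^ β).trans_le hC
  have hroot : exp 1 / β ≤ C ^ (1 / β) :=
    calc exp 1 / β = ((exp 1 / β) ^ β) ^ (1 / β) := by
          rw [one_div, rpow_rpow_inv (by positivity) hβ.ne']
      _ ≤ C ^ (1 / β) := by gcongr
  exact (le_log_iff_exp_le (by positivity)).2 ((div_le_iff₀' hβ).1 hroot)

lemma mul_log_mul_rpow_one_div {β C : ℝ} (hβ : 0 < β) (hC : 0 < C) :
    β * log (β * C ^ (1 / β)) = β * log β + log C := by
  rw [log_mul hβ.ne' (rpow_pos_of_pos hC _).ne', log_rpow hC]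
  field_simp

/-- Lambert-`W`-type bound on the solution of `x = C log^β(x)`. -/
theorem lambert_w_bound (β C x : ℝ) (hβ : 1 ≤ β) (hC : (Real.exp 1 / β) ^ β ≤ C)
    (hx : 1 < x) (heq : x = C * Real.log x ^ β) :
    x ≤ Real.exp ((2 - Real.log (Real.exp 1 - 1) - 1) * β) * β ^ β * C *
      Real.log (β * C ^ (1 / β)) ^ β := by
  have hβ0 : 0 < β := by linarith
  have hC0 : 0 < C := (by positivity : 0 < (exp 1 / β) ^ β).trans_le hC
  have hy : 0 < log x := log_pos hx
  have he : 0 < exp 1 - 1 := by linarith [exp_one_gt_d9]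
  have hK : 1 ≤ exp 1 / (exp 1 - 1) := (one_le_div he).2 (by linarith)
  have hL : 1 ≤ log (β * C ^ (1 / β)) := one_le_log_mul_rpow_one_div hβ0 hC
  have hβL : β ≤ β * log (β * C ^ (1 / β)) := le_mul_of_one_le_right hβ0.le hL
  set t := β * log (β * C ^ (1 / β)) with ht
  have hfix : log x = log C + β * log (log x) := by
    conv_lhs => rw [heq]
    rw [log_mul hC0.ne' (rpow_pos_of_pos hy _).ne', log_rpow hy]
  have hlogx : log x ≤ exp 1 / (exp 1 - 1) * t := by
    refine le_of_sub_mul_log_le hβ0 (hβL.trans (le_mul_of_one_le_left (by linarith) hK)) ?_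
    have hlambert := sub_mul_log_le_sub_mul_log_exp_div_mul hβ0 (hβ0.trans_le hβL)
    rw [ht, mul_log_mul_rpow_one_div hβ0 hC0] at hlambert ⊢
    linarith
  calc x = C * log x ^ β := heq
    _ ≤ C * (exp 1 / (exp 1 - 1) * t) ^ β := by gcongr
    _ = _ := by
      rw [show (2 - log (exp 1 - 1) - 1) * β = (1 - log (exp 1 - 1)) * β by ring, exp_mul,
        exp_sub, exp_log he, ht, mul_rpow (by positivity) (hβ0.le.trans hβL),
        mul_rpow hβ0.le (by linarith)]
      ring
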